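/- arXiv:2407.02629 — 4 statements merged into one kernel-verified Lean document; each statement's English description precedes it below -/
import Mathlib

section
/- Let (S,*) be an adequate partial semigroup. If p, q ∈ δS, then p*q ∈ δS. Consequently δS is closed under the operation *. -/
/-- A partial semigroup: `mul` is partially defined (`none` = undefined), and
associativity holds in the strong sense: either side is defined iff the other is,
and then they agree. -/
structure PartialSemigroup (S : Type*) where
  mul : S → S → Option S
  assoc : ∀ a b c : S,
    (mul a b).bind (fun x => mul x c) = (mul b c).bind (fun y => mul a y)

namespace PartialSemigroup

variable {S : Type*} (P : PartialSemigroup S)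

/-- φ(a) = {t : a*t is defined}. -/
def phi (a : S) : Set S := {t | (P.mul a t).isSome}

/-- σ(H) = ⋂_{s ∈ H} φ(s). -/
def sigma (H : Set S) : Set S := ⋂ s ∈ H, P.phi s

/-- a⁻¹A = {t ∈ φ(a) : a*t ∈ A}. -/
def invImg (a : S) (A : Set S) : Set S :=
  {t | ∃ v, P.mul a t = some v ∧ v ∈ A}

/-- An adequate partial semigroup: σ(H) ≠ ∅ for every finite nonempty H. -/
def Adequate : Prop :=
  ∀ H : Finset S, H.Nonempty → (P.sigma ↑H).Nonempty

/-- δS: ultrafilters containing every φ(x). -/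
def mem_delta (q : Ultrafilter S) : Prop := ∀ x : S, P.phi x ∈ q

/-- Product of a nonempty list, associated to the left; `none` if empty or undefined. -/
def listProd : List S → Option S
  | [] => none
  | a :: l => l.foldl (fun acc b => acc.bind (fun x => P.mul x b)) (some a)

/-- ∏_{t ∈ H} f(t) in increasing order of indices. -/
def finProd (f : ℕ → S) (H : Finset ℕ) : Option S :=
  P.listProd ((H.sort (· ≤ ·)).map f)

/-- Product of a list of partially defined elements. -/
def optProd : List (Option S) → Option S
  | [] => none
  | o :: l => l.foldl (fun acc b => acc.bind (fun x => b.bind (fun y => P.mul x y))) o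

/-- An adequate sequence. -/
def AdequateSeq (f : ℕ → S) : Prop :=
  (∀ H : Finset ℕ, H.Nonempty → (P.finProd f H).isSome) ∧
  (∀ F : Finset S, F.Nonempty → ∃ m : ℕ,
    ∀ H : Finset ℕ, H.Nonempty → (∀ n ∈ H, m ≤ n) →
      ∀ v, P.finProd f H = some v → v ∈ P.sigma ↑F)

/-- The interleaved product (∏_{i=1}^m a(i)*f(t(i)))*a(m+1). -/
def jProd {m : ℕ} (a : Fin (m + 1) → S) (t : Fin m → ℕ) (f : ℕ → S) : Option S :=
  P.listProd
    ((((List.finRange m).map (fun i => [a i.castSucc, f (t i)])).flatten) ++ [a (Fin.last m)])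

/-- J-sets. -/
def IsJSet (A : Set S) : Prop :=
  ∀ F : Finset (ℕ → S), F.Nonempty → (∀ f ∈ F, P.AdequateSeq f) →
    ∀ L : Finset S, L.Nonempty →
      ∃ m : ℕ, 0 < m ∧ ∃ a : Fin (m + 1) → S, ∃ t : Fin m → ℕ, StrictMono t ∧
        ∀ f ∈ F, ∃ v, P.jProd a t f = some v ∧ v ∈ A ∩ P.sigma ↑L

end PartialSemigroup

open PartialSemigroup in
/-- If `(S,*)` is adequate and `p, q ∈ δS`, then `p*q ∈ δS`; thus
`δS` is closed under `*`. -/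
theorem stmt4 {S : Type*} (P : PartialSemigroup S) (hP : P.Adequate)
    (p q : Ultrafilter S) (hp : P.mem_delta p) (hq : P.mem_delta q) :
    ∃ u : Ultrafilter S,
      (∀ A : Set S, A ∈ u ↔ {a : S | P.invImg a A ∈ q} ∈ p) ∧ P.mem_delta u := by
  classical
  -- basic facts about invImg
  have hinv_inter : ∀ (a : S) (A B : Set S),
      P.invImg a (A ∩ B) = P.invImg a A ∩ P.invImg a B := by
    intro a A B
    ext t
    constructor
    · rintro ⟨v, hv, hA, hB⟩
      exact ⟨⟨v, hv, hA⟩, ⟨v, hv, hB⟩⟩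
    · rintro ⟨⟨v, hv, hA⟩, ⟨w, hw, hB⟩⟩
      rw [hv] at hw
      injection hw with h
      subst h
      exact ⟨v, hv, hA, hB⟩
  have hinv_mono : ∀ (a : S) {A B : Set S}, A ⊆ B → P.invImg a A ⊆ P.invImg a B := by
    rintro a A B hAB t ⟨v, hv, hA⟩
    exact ⟨v, hv, hAB hA⟩
  have hinv_univ : ∀ a : S, P.invImg a Set.univ = P.phi a := by
    intro a
    ext t
    simp [PartialSemigroup.invImg, PartialSemigroup.phi, Option.isSome_iff_exists]
  have hinv_compl : ∀ (a : S) (A : Set S),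
      P.invImg a Aᶜ = P.phi a ∩ (P.invImg a A)ᶜ := by
    intro a A
    ext t
    constructor
    · rintro ⟨v, hv, hA⟩
      refine ⟨Option.isSome_iff_exists.mpr ⟨v, hv⟩, ?_⟩
      rintro ⟨w, hw, hwA⟩
      rw [hv] at hw
      injection hw with h
      exact hA (h ▸ hwA)
    · rintro ⟨hdef, hnot⟩
      obtain ⟨v, hv⟩ := Option.isSome_iff_exists.mp hdef
      refine ⟨v, hv, fun hvA => hnot ⟨v, hv, hvA⟩⟩
  -- complement in q
  have hkey : ∀ (a : S) (A : Set S), P.invImg a Aᶜ ∈ q ↔ P.invImg a A ∉ q := by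
    intro a A
    rw [hinv_compl a A]
    constructor
    · intro h
      exact Ultrafilter.compl_mem_iff_notMem.mp
        (Filter.mem_of_superset h Set.inter_subset_right)
    · intro h
      exact Filter.inter_mem (hq a) (Ultrafilter.compl_mem_iff_notMem.mpr h)
  -- the filter
  let F : Filter S :=
    { sets := {A | {a : S | P.invImg a A ∈ q} ∈ p}
      univ_sets := by
        have h : {a : S | P.invImg a Set.univ ∈ q} = Set.univ := by
          apply Set.eq_univ_of_forall
          intro a
          show P.invImg a Set.univ ∈ q
          rw [hinv_univ a]
          exact hq a
        show {a : S | P.invImg a Set.univ ∈ q} ∈ p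
        rw [h]
        exact Filter.univ_mem
      sets_of_superset := by
        intro A B hA hAB
        exact Filter.mem_of_superset hA fun a ha =>
          Filter.mem_of_superset ha (hinv_mono a hAB)
      inter_sets := by
        intro A B hA hB
        have h : {a : S | P.invImg a (A ∩ B) ∈ q}
            = {a : S | P.invImg a A ∈ q} ∩ {a : S | P.invImg a B ∈ q} := by
          ext a
          simp only [Set.mem_setOf_eq, Set.mem_inter_iff, hinv_inter a A B]
          exact ⟨fun h => ⟨Filter.mem_of_superset h Set.inter_subset_left,
              Filter.mem_of_superset h Set.inter_subset_right⟩,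
            fun ⟨h1, h2⟩ => Filter.inter_mem h1 h2⟩
        show {a : S | P.invImg a (A ∩ B) ∈ q} ∈ p
        rw [h]
        exact Filter.inter_mem hA hB }
  have hmemF : ∀ A : Set S, A ∈ F ↔ {a : S | P.invImg a A ∈ q} ∈ p := fun A => Iff.rfl
  have hF : ∀ s : Set S, sᶜ ∉ F ↔ s ∈ F := by
    intro s
    rw [hmemF, hmemF]
    have hset : {a : S | P.invImg a sᶜ ∈ q} = {a : S | P.invImg a s ∈ q}ᶜ := by
      ext a
      simp only [Set.mem_setOf_eq, Set.mem_compl_iff]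
      exact hkey a s
    rw [hset]
    exact Ultrafilter.compl_notMem_iff
  refine ⟨Ultrafilter.ofComplNotMemIff F hF, fun A => Iff.rfl, ?_⟩
  -- mem_delta
  intro x
  show {a : S | P.invImg a (P.phi x) ∈ q} ∈ p
  refine Filter.mem_of_superset (hp x) ?_
  intro a ha
  obtain ⟨w, hw⟩ := Option.isSome_iff_exists.mp ha
  show P.invImg a (P.phi x) ∈ q
  refine Filter.mem_of_superset (hq w) ?_
  intro t ht
  obtain ⟨u, hu⟩ := Option.isSome_iff_exists.mp ht
  have hassoc := P.assoc x a t
  rw [hw] at hassoc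
  simp only [Option.bind_some, Option.bind_some] at hassoc
  rw [hu] at hassoc
  -- hassoc : some u = (P.mul a t).bind fun y => P.mul x y  (or reversed)
  cases hmat : P.mul a t with
  | none =>
      rw [hmat] at hassoc
      simp at hassoc
  | some v =>
      rw [hmat] at hassoc
      simp only [Option.bind_some] at hassoc
      exact ⟨v, hmat, Option.isSome_iff_exists.mpr ⟨u, hassoc.symm⟩⟩
end

section
/- Let (S,*) be an adequate partial semigroup and let p ∈ δS. The following are equivalent: (a) p is in the smallest (two-sided) ideal K(δS) of δS; (b) for all A ∈ p, the set {x ∈ S : x⁻¹A ∈ p} is syndetic; (c) for all q ∈ δS, p ∈ δS*q*p. -/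
namespace PartialSemigroup
variable {S : Type*} (P : PartialSemigroup S)

/-- A syndetic subset of a partial semigroup. -/
def Syndetic (A : Set S) : Prop :=
  ∃ H : Finset S, H.Nonempty ∧ P.sigma ↑H ⊆ ⋃ t ∈ H, P.invImg t A

end PartialSemigroup

namespace PartialSemigroup
variable {S : Type*} (P : PartialSemigroup S)

/-- `I` is a (two-sided) ideal of `δS` (with respect to the operation `star`). -/
def IsIdeal (star : {q : Ultrafilter S // P.mem_delta q} → {q : Ultrafilter S // P.mem_delta q} →
      {q : Ultrafilter S // P.mem_delta q})
    (I : Set {q : Ultrafilter S // P.mem_delta q}) : Prop :=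
  I.Nonempty ∧ ∀ p ∈ I, ∀ q, star p q ∈ I ∧ star q p ∈ I

/-- `K` is the smallest (two-sided) ideal of `δS`. -/
def IsSmallestIdeal (star : {q : Ultrafilter S // P.mem_delta q} →
      {q : Ultrafilter S // P.mem_delta q} → {q : Ultrafilter S // P.mem_delta q})
    (K : Set {q : Ultrafilter S // P.mem_delta q}) : Prop :=
  P.IsIdeal star K ∧ ∀ I, P.IsIdeal star I → K ⊆ I

end PartialSemigroup

/-! The ultrafilters of `δS` form a compact Hausdorff space on which every right translation
`r ↦ r * q` is continuous, so `δS` is a compact right topological semigroup. By Zorn's lemma it has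
minimal closed left ideals; such an ideal `M` equals `δS * x` for each `x ∈ M`, and `M * q` is again
one, so their union is a two-sided ideal and contains `K(δS)`. Hence for `p ∈ K(δS)` in such an `M`,
`δS * (q * p) = M ∋ p`; conversely `p ∈ δS * e * p ⊆ K(δS)` for any `e ∈ K(δS)`.

Unwinding the product, `A ∈ r * q * p` says `{t : t⁻¹B ∈ q} ∈ r` for `B = {x : x⁻¹A ∈ p}`, so (c)
makes every `q ∈ δS` contain some `t⁻¹B`, which by compactness of `δS` means that `B` is syndetic.
Conversely, syndeticity of these sets puts each `{a : a⁻¹A ∈ q * p}` (`A ∈ p`) into some `r ∈ δS`,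
so `p` lies in the closure of `δS * (q * p)`, a compact and hence closed set. -/

open Set Filter

section RightTopological

variable {X : Type*} [TopologicalSpace X] {star : X → X → X}

def IsClosedLeftIdeal (star : X → X → X) (L : Set X) : Prop :=
  L.Nonempty ∧ IsClosed L ∧ ∀ x ∈ L, ∀ r, star r x ∈ L

theorem IsClosedLeftIdeal.exists_minimal_subset [CompactSpace X] {L : Set X}
    (hL : IsClosedLeftIdeal star L) : ∃ M ⊆ L, Minimal (IsClosedLeftIdeal star) M := by
  refine zorn_superset_nonempty {L | IsClosedLeftIdeal star L} (fun c hc hchain hne => ?_) L hL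
  have : Nonempty c := hne.to_subtype
  refine ⟨⋂₀ c, ⟨?_, isClosed_sInter fun L hL => (hc hL).2.1,
    fun x hx r L hL => (hc hL).2.2 x (hx L hL) r⟩, fun L hL => sInter_subset_of_mem hL⟩
  exact IsCompact.nonempty_sInter_of_directed_nonempty_isCompact_isClosed
    (fun A hA B hB => (hchain.total hA hB).elim (fun h => ⟨A, hA, subset_rfl, h⟩)
      (fun h => ⟨B, hB, h, subset_rfl⟩))
    (fun L hL => (hc hL).1) (fun L hL => (hc hL).2.1.isCompact) (fun L hL => (hc hL).2.1)

variable [CompactSpace X] [T2Space X]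

theorem isClosedLeftIdeal_range_star (assoc : ∀ a b c, star (star a b) c = star a (star b c))
    (cont : ∀ q, Continuous (star · q)) [Nonempty X] (q : X) :
    IsClosedLeftIdeal star (range (star · q)) :=
  ⟨range_nonempty _, (isCompact_range (cont q)).isClosed,
    by rintro _ ⟨x, rfl⟩ r; exact ⟨star r x, assoc r x q⟩⟩

theorem Minimal.range_star_eq (assoc : ∀ a b c, star (star a b) c = star a (star b c))
    (cont : ∀ q, Continuous (star · q)) {M : Set X} (hM : Minimal (IsClosedLeftIdeal star) M)
    {x : X} (hx : x ∈ M) : range (star · x) = M :=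
  have : Nonempty X := ⟨x⟩
  hM.eq_of_subset (isClosedLeftIdeal_range_star assoc cont x)
    (by rintro _ ⟨r, rfl⟩; exact hM.1.2.2 x hx r)

theorem Minimal.image_star (assoc : ∀ a b c, star (star a b) c = star a (star b c))
    (cont : ∀ q, Continuous (star · q)) {M : Set X} (hM : Minimal (IsClosedLeftIdeal star) M)
    (q : X) : Minimal (IsClosedLeftIdeal star) ((star · q) '' M) := by
  have hMq : ∀ y ∈ (star · q) '' M, (star · q) '' M = range (star · y) := by
    rintro _ ⟨x, hx, rfl⟩
    rw [← hM.range_star_eq assoc cont hx, ← range_comp]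
    simp only [Function.comp_def, assoc]
  obtain ⟨x, hx⟩ := hM.1.1
  have : Nonempty X := ⟨x⟩
  refine ⟨?_, fun L hL hLM => ?_⟩
  · rw [hMq _ (mem_image_of_mem _ hx)]
    exact isClosedLeftIdeal_range_star assoc cont _
  · obtain ⟨y, hy⟩ := hL.1
    rw [hMq y (hLM hy)]
    rintro _ ⟨r, rfl⟩
    exact hL.2.2 y hy r

end RightTopological

namespace PartialSemigroup

variable {S : Type*} {P : PartialSemigroup S}

abbrev Delta (P : PartialSemigroup S) : Type _ := {q : Ultrafilter S // P.mem_delta q}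

def IsUltrafilterMul (P : PartialSemigroup S) (star : P.Delta → P.Delta → P.Delta) : Prop :=
  ∀ p q (A : Set S), A ∈ (star p q).1 ↔ {a : S | P.invImg a A ∈ q.1} ∈ p.1

theorem mem_sigma_iff {H : Set S} {x : S} : x ∈ P.sigma H ↔ ∀ s ∈ H, x ∈ P.phi s :=
  mem_iInter₂

theorem sigma_anti : Antitone P.sigma :=
  fun _ _ h _ hx => mem_sigma_iff.2 fun s hs => mem_sigma_iff.1 hx s (h hs)

theorem sigma_mem {q : Ultrafilter S} (hq : P.mem_delta q) (H : Finset S) : P.sigma ↑H ∈ q :=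
  (biInter_finset_mem H).2 fun s _ => hq s

theorem invImg_mono (a : S) : Monotone (P.invImg a) := by
  rintro A B h t ⟨v, hv, hvA⟩
  exact ⟨v, hv, h hvA⟩

theorem invImg_invImg {a x v : S} (h : P.mul a x = some v) (A : Set S) :
    P.invImg x (P.invImg a A) = P.invImg v A := by
  ext t
  have hassoc := P.assoc a x t
  rw [h, Option.bind_some] at hassoc
  constructor
  · rintro ⟨u, hu, w, hw, hwA⟩
    exact ⟨w, by rw [hassoc, hu, Option.bind_some, hw], hwA⟩
  · rintro ⟨w, hw, hwA⟩
    obtain ⟨u, hu, hau⟩ := Option.bind_eq_some_iff.1 (hassoc ▸ hw)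
    exact ⟨u, hu, w, hau, hwA⟩

theorem invImg_setOf_invImg_mem (b : S) (A : Set S) (r : Ultrafilter S) :
    P.invImg b {a | P.invImg a A ∈ r} = {a | P.invImg a (P.invImg b A) ∈ r} ∩ P.phi b := by
  ext x
  constructor
  · rintro ⟨v, hv, hvA⟩
    exact ⟨by rwa [mem_ofPred_eq, invImg_invImg hv], by simp [phi, hv]⟩
  · rintro ⟨hx, hxb⟩
    obtain ⟨v, hv⟩ := Option.isSome_iff_exists.1 hxb
    exact ⟨v, hv, by rwa [mem_ofPred_eq, invImg_invImg hv] at hx⟩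

theorem mem_phi_of_mul_eq_some {s x y v : S} (h : P.mul x y = some v) (hv : v ∈ P.phi s) :
    x ∈ P.phi s := by
  have hassoc := P.assoc s x y
  rw [h, Option.bind_some] at hassoc
  cases hsx : P.mul s x with
  | none =>
    rw [hsx, Option.bind_none] at hassoc
    simp [phi, ← hassoc] at hv
  | some _ => simp [phi, hsx]

theorem mem_sigma_of_invImg_nonempty {x : S} {H : Set S} (h : (P.invImg x (P.sigma H)).Nonempty) :
    x ∈ P.sigma H := by
  obtain ⟨y, v, hv, hvH⟩ := h
  exact mem_sigma_iff.2 fun s hs => mem_phi_of_mul_eq_some hv (mem_sigma_iff.1 hvH s hs)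

theorem isClosed_setOf_mem_delta : IsClosed {q : Ultrafilter S | P.mem_delta q} := by
  simp only [mem_delta, ofPred_forall]
  exact isClosed_iInter fun x => ultrafilter_isClosed_basic (P.phi x)

instance : CompactSpace P.Delta :=
  isCompact_iff_compactSpace.1 isClosed_setOf_mem_delta.isCompact

theorem mem_of_isClosed_of_forall_exists_mem {Z : Set P.Delta} (hZ : IsClosed Z) {p : P.Delta}
    (h : ∀ A ∈ p.1, ∃ r ∈ Z, A ∈ r.1) : p ∈ Z := by
  rw [← hZ.closure_eq, Topology.IsEmbedding.subtypeVal.closure_eq_preimage_closure_image,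
    mem_preimage]
  refine ultrafilterBasis_is_basis.mem_closure_iff.2 ?_
  rintro _ ⟨A, rfl⟩ hA
  obtain ⟨r, hrZ, hAr⟩ := h A hA
  exact ⟨r.1, hAr, r, hrZ, rfl⟩

theorem exists_mem_of_inter_sigma_nonempty {C : Set S}
    (h : ∀ F : Finset S, (C ∩ P.sigma ↑F).Nonempty) : ∃ u : P.Delta, C ∈ u.1 := by
  classical
  have hanti : Antitone fun F : Finset S => {u : Ultrafilter S | C ∩ P.sigma ↑F ∈ u} :=
    fun F G hFG u hu => mem_of_superset hu (inter_subset_inter_right C (sigma_anti hFG))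
  obtain ⟨u, hu⟩ := IsCompact.nonempty_iInter_of_directed_nonempty_isCompact_isClosed _
    hanti.directed_ge (fun F => let ⟨x, hx⟩ := h F; ⟨pure x, Ultrafilter.mem_pure.2 hx⟩)
    (fun _ => (ultrafilter_isClosed_basic _).isCompact) (fun _ => ultrafilter_isClosed_basic _)
  rw [mem_iInter] at hu
  refine ⟨⟨u, fun x => mem_of_superset (hu {x}) ?_⟩, mem_of_superset (hu ∅) inter_subset_left⟩
  exact fun y hy => mem_sigma_iff.1 hy.2 x (Finset.mem_singleton_self x)

theorem syndetic_of_forall_exists_invImg_mem [Nonempty P.Delta] {B : Set S}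
    (h : ∀ q : P.Delta, ∃ t, P.invImg t B ∈ q.1) : P.Syndetic B := by
  classical
  obtain ⟨H, hH⟩ := isCompact_univ.elim_finite_subcover
    (fun t => {q : P.Delta | P.invImg t B ∈ q.1})
    (fun t => (ultrafilter_isOpen_basic _).preimage continuous_subtype_val)
    (fun q _ => mem_iUnion.2 (h q))
  have hHne : H.Nonempty := by
    obtain ⟨q⟩ := ‹Nonempty P.Delta›
    obtain ⟨t, ht, -⟩ := mem_iUnion₂.1 (hH (mem_univ q))
    exact ⟨t, ht⟩
  obtain ⟨F, hF⟩ : ∃ F : Finset S, (⋃ t ∈ H, P.invImg t B)ᶜ ∩ P.sigma ↑F = ∅ := by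
    by_contra! hne
    obtain ⟨u, hu⟩ := exists_mem_of_inter_sigma_nonempty hne
    obtain ⟨t, ht, htu⟩ := mem_iUnion₂.1 (hH (mem_univ u))
    exact (Ultrafilter.compl_mem_iff_notMem.1 hu)
      (mem_of_superset htu (subset_biUnion_of_mem (u := fun t => P.invImg t B) ht))
  refine ⟨H ∪ F, hHne.mono Finset.subset_union_left, fun x hx => ?_⟩
  have hxH : x ∈ ⋃ t ∈ H, P.invImg t B := by
    by_contra hxH
    exact eq_empty_iff_forall_notMem.1 hF x ⟨hxH, sigma_anti (by simp) hx⟩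
  exact biUnion_mono (by simp) (fun _ _ => subset_rfl) hxH

section Star

variable {star : P.Delta → P.Delta → P.Delta}

theorem star_assoc (hstar : P.IsUltrafilterMul star) (p q r : P.Delta) :
    star (star p q) r = star p (star q r) := by
  refine Subtype.ext (Ultrafilter.ext fun A => ?_)
  have hmid : ∀ b, P.invImg b {a | P.invImg a A ∈ r.1} ∈ q.1 ↔
      {a | P.invImg a (P.invImg b A) ∈ r.1} ∈ q.1 := fun b => by
    rw [invImg_setOf_invImg_mem]
    exact ⟨fun h => mem_of_superset h inter_subset_left, fun h => inter_mem h (q.2 b)⟩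
  unfold IsUltrafilterMul at hstar
  simp only [hstar, hmid]

theorem continuous_star_left (hstar : P.IsUltrafilterMul star) (q : P.Delta) :
    Continuous (star · q) := by
  refine continuous_induced_rng.2 (ultrafilterBasis_is_basis.continuous_iff.2 ?_)
  rintro _ ⟨A, rfl⟩
  have hpre : {r : P.Delta | A ∈ (star r q).1} =
      Subtype.val ⁻¹' {u : Ultrafilter S | {a | P.invImg a A ∈ q.1} ∈ u} :=
    Set.ext fun r => hstar r q A
  change IsOpen {r : P.Delta | A ∈ (star r q).1}
  rw [hpre]
  exact (ultrafilter_isOpen_basic _).preimage continuous_subtype_val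

theorem isIdeal_sUnion_minimal [Nonempty P.Delta] (hstar : P.IsUltrafilterMul star) :
    P.IsIdeal star (⋃₀ {M | Minimal (IsClosedLeftIdeal star) M}) := by
  have assoc := star_assoc hstar
  have cont := continuous_star_left hstar
  refine ⟨?_, ?_⟩
  · obtain ⟨e⟩ := ‹Nonempty P.Delta›
    obtain ⟨M, -, hM⟩ := (isClosedLeftIdeal_range_star assoc cont e).exists_minimal_subset
    obtain ⟨x, hx⟩ := hM.1.1
    exact ⟨x, M, hM, hx⟩
  · rintro x ⟨M, hM, hx⟩ q
    exact ⟨⟨_, hM.image_star assoc cont q, mem_image_of_mem _ hx⟩, M, hM, hM.1.2.2 x hx q⟩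

variable {K : Set P.Delta} {p : P.Delta}

theorem exists_star_star_eq_of_mem (hstar : P.IsUltrafilterMul star)
    (hK : P.IsSmallestIdeal star K) (hp : p ∈ K) (q : P.Delta) : ∃ r, star (star r q) p = p := by
  have : Nonempty P.Delta := ⟨p⟩
  obtain ⟨M, hM, hpM⟩ := hK.2 _ (isIdeal_sUnion_minimal hstar) hp
  obtain ⟨r, hr⟩ : p ∈ range (star · (star q p)) := by
    rw [hM.range_star_eq (star_assoc hstar) (continuous_star_left hstar) (hM.1.2.2 p hpM q)]
    exact hpM
  exact ⟨r, (star_assoc hstar r q p).trans hr⟩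

theorem mem_of_forall_exists_star_star_eq (hK : P.IsIdeal star K)
    (hc : ∀ q, ∃ r, star (star r q) p = p) : p ∈ K := by
  obtain ⟨e, he⟩ := hK.1
  obtain ⟨r, hr⟩ := hc e
  exact hr ▸ (hK.2 _ (hK.2 e he r).2 p).1

theorem syndetic_of_forall_exists_star_star_eq (hstar : P.IsUltrafilterMul star)
    (hc : ∀ q, ∃ r, star (star r q) p = p) {A : Set S} (hA : A ∈ p.1) :
    P.Syndetic {x | P.invImg x A ∈ p.1} := by
  have : Nonempty P.Delta := ⟨p⟩
  refine syndetic_of_forall_exists_invImg_mem fun q => ?_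
  obtain ⟨r, hr⟩ := hc q
  rw [← hr, hstar, hstar] at hA
  exact Ultrafilter.nonempty_of_mem hA

theorem inter_sigma_nonempty_of_syndetic (hstar : P.IsUltrafilterMul star)
    (hb : ∀ A ∈ p.1, P.Syndetic {x | P.invImg x A ∈ p.1}) {A : Set S} (hA : A ∈ p.1)
    (q : P.Delta) (F : Finset S) :
    ({a | P.invImg a A ∈ (star q p).1} ∩ P.sigma ↑F).Nonempty := by
  obtain ⟨H, -, hH⟩ := hb _ (inter_mem hA (sigma_mem p.2 F))
  obtain ⟨t, -, ht⟩ := (Ultrafilter.finite_biUnion_mem_iff H.finite_toSet).1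
    (mem_of_superset (sigma_mem q.2 H) hH)
  refine ⟨t, ?_, ?_⟩
  · refine (hstar q p _).2 (mem_of_superset ht ?_)
    rintro x ⟨v, hv, hvA⟩
    rw [mem_ofPred_eq, invImg_invImg hv]
    exact mem_of_superset hvA (invImg_mono v inter_subset_left)
  · obtain ⟨x, v, hv, hvA⟩ := Ultrafilter.nonempty_of_mem ht
    refine mem_sigma_of_invImg_nonempty ⟨x, v, hv, mem_sigma_of_invImg_nonempty ?_⟩
    exact (Ultrafilter.nonempty_of_mem hvA).mono (invImg_mono v inter_subset_right)

theorem exists_star_star_eq_of_syndetic (hstar : P.IsUltrafilterMul star)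
    (hb : ∀ A ∈ p.1, P.Syndetic {x | P.invImg x A ∈ p.1}) (q : P.Delta) :
    ∃ r, star (star r q) p = p := by
  suffices p ∈ range (star · (star q p)) by
    obtain ⟨r, hr⟩ := this
    exact ⟨r, (star_assoc hstar r q p).trans hr⟩
  have : Nonempty P.Delta := ⟨p⟩
  refine mem_of_isClosed_of_forall_exists_mem
    (isClosedLeftIdeal_range_star (star_assoc hstar) (continuous_star_left hstar) _).2.1
    fun A hA => ?_
  obtain ⟨r, hr⟩ :=
    exists_mem_of_inter_sigma_nonempty (inter_sigma_nonempty_of_syndetic hstar hb hA q)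
  exact ⟨star r (star q p), mem_range_self r, (hstar _ _ _).2 hr⟩

end Star

end PartialSemigroup

open PartialSemigroup in
theorem stmt9_general {S : Type*} (P : PartialSemigroup S)
    (star : {q : Ultrafilter S // P.mem_delta q} → {q : Ultrafilter S // P.mem_delta q} →
      {q : Ultrafilter S // P.mem_delta q})
    (hstar : ∀ p q (A : Set S),
      A ∈ (star p q).1 ↔ {a : S | P.invImg a A ∈ q.1} ∈ p.1)
    (K : Set {q : Ultrafilter S // P.mem_delta q}) (hK : P.IsSmallestIdeal star K)
    (p : {q : Ultrafilter S // P.mem_delta q}) :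
    (p ∈ K ↔ ∀ A : Set S, A ∈ p.1 → P.Syndetic {x : S | P.invImg x A ∈ p.1}) ∧
    (p ∈ K ↔ ∀ q, ∃ r, star (star r q) p = p) := by
  have hac : p ∈ K → ∀ q, ∃ r, star (star r q) p = p := exists_star_star_eq_of_mem hstar hK
  have hca := mem_of_forall_exists_star_star_eq (p := p) hK.1
  exact ⟨⟨fun h _ => syndetic_of_forall_exists_star_star_eq hstar (hac h),
    fun h => hca (exists_star_star_eq_of_syndetic hstar h)⟩, hac, hca⟩

open PartialSemigroup in
/-- For `p ∈ δS`, TFAE: (a) `p ∈ K(δS)`; (b) for all `A ∈ p`,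
`{x : x⁻¹A ∈ p}` is syndetic; (c) for all `q ∈ δS`, `p ∈ δS*q*p`. -/
theorem stmt9 {S : Type*} (P : PartialSemigroup S) (hP : P.Adequate)
    (star : {q : Ultrafilter S // P.mem_delta q} → {q : Ultrafilter S // P.mem_delta q} →
      {q : Ultrafilter S // P.mem_delta q})
    (hstar : ∀ p q (A : Set S),
      A ∈ (star p q).1 ↔ {a : S | P.invImg a A ∈ q.1} ∈ p.1)
    (K : Set {q : Ultrafilter S // P.mem_delta q}) (hK : P.IsSmallestIdeal star K)
    (p : {q : Ultrafilter S // P.mem_delta q}) :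
    (p ∈ K ↔ ∀ A : Set S, A ∈ p.1 → P.Syndetic {x : S | P.invImg x A ∈ p.1}) ∧
    (p ∈ K ↔ ∀ q, ∃ r, star (star r q) p = p) :=
  stmt9_general P star hstar K hK p
end

section
/- Let (S,*) be an adequate partial semigroup, let r be an idempotent in J(S) ⊆ δS, and let (C_n)_{n=1}^∞ be a sequence of members of r. Then there exist functions m* : P_f(ℱ) → ℕ, α ∈ ∏_{F∈P_f(ℱ)} S^{m*(F)+1}, and 𝒯 ∈ ∏_{F∈P_f(ℱ)} 𝒥_{m*(F)} such that: (1) if F, G ∈ P_f(ℱ) with G ⊊ F, then 𝒯(G)(m*(G)) < 𝒯(F)(1); and (2) whenever m ∈ ℕ, G_1 ⊊ G_2 ⊊ ... ⊊ G_s are members of P_f(ℱ) with |G_1| = m, and f_i ∈ G_i for each i ∈ {1,...,s}, then ∏_{i=1}^{s} ((∏_{j=1}^{m*(G_i)} α(G_i)(j)*f_i(𝒯(G_i)(j)))*α(G_i)(m*(G_i)+1)) ∈ C_m. -/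
/-!
Choose `(m*(F), α(F), 𝒯(F))` by recursion along `⊊`. For `A ∈ r` put `A⋆ = {a ∈ A : a⁻¹A ∈ r}`;
idempotence of `r` gives `A⋆ ∈ r` and `x⁻¹(A⋆) ∈ r` for every `x ∈ A⋆`. Suppose the product along
every chain `G₁ ⊊ ⋯ ⊊ G_s ⊊ F` (with `f_i ∈ G_i`) is already defined and lies in `C_{|G₁|}⋆`. Only
finitely many such chains exist, so the set of `y ∈ C_{|F|}⋆` with `x * y ∈ C_{|G₁|}⋆` for each of
their products `x` is a member of `r`, hence a J-set. Its J-set property, applied to the sequences of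
`F` shifted beyond every index used below `F`, produces the data at `F`, and then every chain ending
in `F` again has its product in `C_{|G₁|}⋆`.
-/

/-- The data `(m*(F), α(F), 𝒯(F))` attached to one member `F` of `P_f(ℱ)`. -/
structure Stage (S : Type*) where
  m : ℕ
  a : Fin (m + 1) → S
  t : Fin m → ℕ

instance {S : Type*} [Nonempty S] : Nonempty (Stage S) :=
  ‹Nonempty S›.map fun x => ⟨0, fun _ => x, Fin.elim0⟩

lemma Fin.val_le_of_strictMono {n : ℕ} {g : Fin n → ℕ} (hg : StrictMono g) (i : Fin n) :
    (i : ℕ) ≤ g i := by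
  obtain ⟨i, hi⟩ := i
  induction i with
  | zero => exact Nat.zero_le _
  | succ i ih =>
    have hlt : g ⟨i, by omega⟩ < g ⟨i + 1, hi⟩ := hg (Nat.lt_succ_self i)
    have := ih (by omega)
    simp only at this ⊢
    omega

namespace PartialSemigroup

variable {S : Type*} (P : PartialSemigroup S)

lemma invImg_invImg_subset {x t v : S} (hxt : P.mul x t = some v) (A : Set S) :
    P.invImg t (P.invImg x A) ⊆ P.invImg v A := by
  rintro u ⟨w, htu, z, hxw, hz⟩
  have hassoc := P.assoc x t u
  rw [hxt, htu] at hassoc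
  exact ⟨z, hassoc.trans hxw, hz⟩

def starSet (r : Ultrafilter S) (A : Set S) : Set S := A ∩ {a | P.invImg a A ∈ r}

lemma starSet_subset (r : Ultrafilter S) (A : Set S) : P.starSet r A ⊆ A :=
  Set.inter_subset_left

variable {P}

lemma starSet_mem {r : Ultrafilter S} (hr : ∀ A ∈ r, {a | P.invImg a A ∈ r} ∈ r) {A : Set S}
    (hA : A ∈ r) : P.starSet r A ∈ r :=
  Filter.inter_mem hA (hr A hA)

lemma invImg_starSet_mem {r : Ultrafilter S} (hr : ∀ A ∈ r, {a | P.invImg a A ∈ r} ∈ r)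
    {A : Set S} {x : S} (hx : x ∈ P.starSet r A) : P.invImg x (P.starSet r A) ∈ r := by
  refine Filter.mem_of_superset (Filter.inter_mem hx.2 (hr _ hx.2)) ?_
  rintro t ⟨⟨v, hxt, hv⟩, ht⟩
  exact ⟨v, hxt, hv, Filter.mem_of_superset ht (P.invImg_invImg_subset hxt A)⟩

variable (P) in
lemma finProd_comp_add (f : ℕ → S) (k : ℕ) (H : Finset ℕ) :
    P.finProd (fun n => f (n + k)) H = P.finProd f (H.map (addRightEmbedding k)) := by
  rw [finProd, finProd, ← Finset.map_sort (addRightEmbedding k) H (· ≤ ·) (· ≤ ·) (by simp),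
    List.map_map]
  rfl

lemma AdequateSeq.comp_add {f : ℕ → S} (hf : P.AdequateSeq f) (k : ℕ) :
    P.AdequateSeq (fun n => f (n + k)) := by
  refine ⟨fun H hH => ?_, fun L hL => ?_⟩
  · rw [finProd_comp_add]
    exact hf.1 _ hH.map
  · obtain ⟨m, hm⟩ := hf.2 L hL
    refine ⟨m, fun H hH hmH v hv => hm _ hH.map ?_ v (by rwa [finProd_comp_add] at hv)⟩
    simp only [Finset.mem_map, addRightEmbedding_apply, forall_exists_index, and_imp]
    rintro _ n hn rfl
    exact (hmH n hn).trans (Nat.le_add_right n k)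

lemma optProd_append_singleton {l : List (Option S)} (hl : l ≠ []) (o : Option S) :
    P.optProd (l ++ [o]) = (P.optProd l).bind fun x => o.bind (P.mul x) := by
  obtain ⟨a, l, rfl⟩ := List.exists_cons_of_ne_nil hl
  simp only [optProd, List.cons_append, List.foldl_append, List.foldl_cons, List.foldl_nil]

variable (P)

/-- The index set `P_f(ℱ)`. -/
abbrev AdequateFamily : Type _ := {G : Finset (ℕ → S) // G.Nonempty ∧ ∀ f ∈ G, P.AdequateSeq f}

def IsChain {s : ℕ} (G : Fin (s + 1) → P.AdequateFamily) (f : Fin (s + 1) → ℕ → S) : Prop :=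
  StrictMono (fun i => (G i).1) ∧ ∀ i, f i ∈ (G i).1

def chainProd (b : P.AdequateFamily → Stage S) {s : ℕ} (G : Fin (s + 1) → P.AdequateFamily)
    (f : Fin (s + 1) → ℕ → S) : Option S :=
  P.optProd ((List.finRange (s + 1)).map fun i => P.jProd (b (G i)).a (b (G i)).t (f i))

def chainsBelow (F : P.AdequateFamily) (s : ℕ) :
    Set ((Fin (s + 1) → P.AdequateFamily) × (Fin (s + 1) → ℕ → S)) :=
  {c | P.IsChain c.1 c.2 ∧ (c.1 (Fin.last s)).1 ⊂ F.1}

def chainExtenders (r : Ultrafilter S) (C : ℕ → Set S) (b : P.AdequateFamily → Stage S)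
    (F : P.AdequateFamily) : Set S :=
  {y | ∀ s, ∀ c ∈ P.chainsBelow F s, ∀ x, P.chainProd b c.1 c.2 = some x →
    ∃ w, P.mul x y = some w ∧ w ∈ P.starSet r (C (c.1 0).1.card)}

/-- What the recursion demands of the data `d` at `F`, given the data `b` below `F`. -/
def IsAdmissible (r : Ultrafilter S) (C : ℕ → Set S) (b : P.AdequateFamily → Stage S)
    (F : P.AdequateFamily) (d : Stage S) : Prop :=
  StrictMono d.t ∧ (∀ G : P.AdequateFamily, G.1 ⊂ F.1 → ∀ i j, (b G).t i < d.t j) ∧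
    ∀ f ∈ F.1, ∃ v, P.jProd d.a d.t f = some v ∧
      v ∈ P.starSet r (C F.1.card) ∩ P.chainExtenders r C b F

variable {P}

section Chains

variable {s : ℕ} {G : Fin (s + 1) → P.AdequateFamily} {f : Fin (s + 1) → ℕ → S}

lemma IsChain.init {G : Fin (s + 2) → P.AdequateFamily} {f : Fin (s + 2) → ℕ → S}
    (hc : P.IsChain G f) : P.IsChain (fun i => G i.castSucc) (fun i => f i.castSucc) :=
  ⟨hc.1.comp Fin.strictMono_castSucc, fun i => hc.2 i.castSucc⟩

lemma IsChain.ssubset_of_last_ssubset (hc : P.IsChain G f) {F : P.AdequateFamily}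
    (hF : (G (Fin.last s)).1 ⊂ F.1) (i : Fin (s + 1)) : (G i).1 ⊂ F.1 :=
  (hc.1.monotone (Fin.le_last i)).trans_lt hF

lemma IsChain.length_lt_card (hc : P.IsChain G f) {F : P.AdequateFamily}
    (hF : (G (Fin.last s)).1 ⊂ F.1) : s < F.1.card :=
  (Fin.val_le_of_strictMono (Finset.card_strictMono.comp hc.1) (Fin.last s)).trans_lt
    (Finset.card_lt_card hF)

lemma chainProd_congr {b₁ b₂ : P.AdequateFamily → Stage S} (h : ∀ i, b₁ (G i) = b₂ (G i)) :
    P.chainProd b₁ G f = P.chainProd b₂ G f := by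
  refine congrArg P.optProd (List.map_congr_left fun i _ => ?_)
  rw [h i]

lemma chainProd_succ (b : P.AdequateFamily → Stage S) (G : Fin (s + 2) → P.AdequateFamily)
    (f : Fin (s + 2) → ℕ → S) :
    P.chainProd b G f = (P.chainProd b (fun i => G i.castSucc) (fun i => f i.castSucc)).bind
      fun x => (P.jProd (b (G (Fin.last _))).a (b (G (Fin.last _))).t (f (Fin.last _))).bind
        (P.mul x) := by
  rw [chainProd, List.finRange_succ_last, List.map_append, List.map_map, List.map_singleton,
    optProd_append_singleton (by simp)]
  rfl

lemma chainProd_mem_starSet {r : Ultrafilter S} {C : ℕ → Set S} {b : P.AdequateFamily → Stage S} :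
    ∀ {s : ℕ} {G : Fin (s + 1) → P.AdequateFamily} {f : Fin (s + 1) → ℕ → S},
      P.IsChain G f → (∀ i, P.IsAdmissible r C b (G i) (b (G i))) →
      ∃ x, P.chainProd b G f = some x ∧ x ∈ P.starSet r (C (G 0).1.card)
  | 0, G, f, hc, hb => by
    obtain ⟨v, hv, hvC, -⟩ := (hb 0).2.2 (f 0) (hc.2 0)
    exact ⟨v, hv, hvC⟩
  | s + 1, G, f, hc, hb => by
    obtain ⟨x, hx, -⟩ := chainProd_mem_starSet hc.init fun i => hb i.castSucc
    obtain ⟨v, hv, -, hvE⟩ := (hb (Fin.last _)).2.2 _ (hc.2 _)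
    obtain ⟨w, hw, hwC⟩ := hvE s (_, _) ⟨hc.init, hc.1 (Fin.castSucc_lt_last _)⟩ x hx
    refine ⟨w, ?_, hwC⟩
    rw [chainProd_succ, hx, Option.bind_some, hv]
    exact hw

end Chains

lemma chainExtenders_congr {r : Ultrafilter S} {C : ℕ → Set S} {b₁ b₂ : P.AdequateFamily → Stage S}
    {F : P.AdequateFamily} (h : ∀ G : P.AdequateFamily, G.1 ⊂ F.1 → b₁ G = b₂ G) :
    P.chainExtenders r C b₁ F = P.chainExtenders r C b₂ F := by
  have key : ∀ s, ∀ c ∈ P.chainsBelow F s, P.chainProd b₁ c.1 c.2 = P.chainProd b₂ c.1 c.2 :=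
    fun s c hc => chainProd_congr fun i => h _ (hc.1.ssubset_of_last_ssubset hc.2 i)
  ext y
  simp +contextual only [chainExtenders, key, Set.mem_ofPred_eq]

lemma isAdmissible_congr {r : Ultrafilter S} {C : ℕ → Set S} {b₁ b₂ : P.AdequateFamily → Stage S}
    {F : P.AdequateFamily} (h : ∀ G : P.AdequateFamily, G.1 ⊂ F.1 → b₁ G = b₂ G) {d : Stage S} :
    P.IsAdmissible r C b₁ F d ↔ P.IsAdmissible r C b₂ F d := by
  rw [IsAdmissible, IsAdmissible, chainExtenders_congr h]
  exact and_congr_right' (and_congr_left' (forall₂_congr fun G hG => by rw [h G hG]))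

lemma finite_chainsBelow (F : P.AdequateFamily) (s : ℕ) : (P.chainsBelow F s).Finite := by
  let code : (Fin (s + 1) → P.AdequateFamily) × (Fin (s + 1) → ℕ → S) →
      Fin (s + 1) → Finset (ℕ → S) × (ℕ → S) := fun c i => ((c.1 i).1, c.2 i)
  have hcode : code.Injective := fun c c' h => by
    have h' := fun i => Prod.ext_iff.1 (congr_fun h i)
    exact Prod.ext (funext fun i => Subtype.ext (h' i).1) (funext fun i => (h' i).2)
  refine ((Set.Finite.pi fun _ => (F.1.powerset ×ˢ F.1).finite_toSet).preimage
    hcode.injOn).subset fun c hc i _ => ?_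
  have hsub := (hc.1.ssubset_of_last_ssubset hc.2 i).subset
  simpa using ⟨hsub, hsub (hc.1.2 i)⟩

lemma chainExtenders_mem {r : Ultrafilter S} (hr : ∀ A ∈ r, {a | P.invImg a A ∈ r} ∈ r)
    {C : ℕ → Set S} {b : P.AdequateFamily → Stage S} {F : P.AdequateFamily}
    (hb : ∀ G : P.AdequateFamily, G.1 ⊂ F.1 → P.IsAdmissible r C b G (b G)) :
    P.chainExtenders r C b F ∈ r := by
  have hchain : ∀ s, ∀ c ∈ P.chainsBelow F s, {y | ∀ x, P.chainProd b c.1 c.2 = some x →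
      ∃ w, P.mul x y = some w ∧ w ∈ P.starSet r (C (c.1 0).1.card)} ∈ r := by
    rintro s ⟨G, f⟩ ⟨hc, hF⟩
    obtain ⟨x, hx, hxC⟩ := chainProd_mem_starSet hc fun i => hb _ (hc.ssubset_of_last_ssubset hF i)
    filter_upwards [invImg_starSet_mem hr hxC] with y ⟨w, hw, hwC⟩ x' hx'
    obtain rfl : x = x' := Option.some_injective _ (hx.symm.trans hx')
    exact ⟨w, hw, hwC⟩
  refine Filter.mem_of_superset ((Filter.biInter_finset_mem (Finset.range F.1.card)).2 fun s _ =>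
    (Filter.biInter_mem (finite_chainsBelow F s)).2 (hchain s)) fun y hy s c hc => ?_
  simp only [Set.mem_iInter] at hy
  exact hy s (Finset.mem_range.2 (hc.1.length_lt_card hc.2)) c hc

lemma exists_bound_below (b : P.AdequateFamily → Stage S) (F : P.AdequateFamily) :
    ∃ k, ∀ G : P.AdequateFamily, G.1 ⊂ F.1 → ∀ i, (b G).t i < k := by
  have hbelow : {G : P.AdequateFamily | G.1 ⊂ F.1}.Finite :=
    (F.1.powerset.finite_toSet.preimage Subtype.val_injective.injOn).subset
      fun G hG => Finset.mem_powerset.2 hG.subset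
  obtain ⟨k, hk⟩ := (hbelow.biUnion fun G _ => Set.finite_range (b G).t).bddAbove
  exact ⟨k + 1, fun G hG i => Nat.lt_succ_of_le (hk (Set.mem_biUnion hG ⟨i, rfl⟩))⟩

lemma exists_isAdmissible {r : Ultrafilter S} (hr : ∀ A ∈ r, {a | P.invImg a A ∈ r} ∈ r)
    (hrJ : ∀ A ∈ r, P.IsJSet A) {C : ℕ → Set S} (hC : ∀ n, C n ∈ r)
    {b : P.AdequateFamily → Stage S} {F : P.AdequateFamily}
    (hb : ∀ G : P.AdequateFamily, G.1 ⊂ F.1 → P.IsAdmissible r C b G (b G)) :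
    ∃ d, P.IsAdmissible r C b F d := by
  classical
  obtain ⟨k, hk⟩ := exists_bound_below b F
  obtain ⟨s₀⟩ := Filter.nonempty_of_neBot (r : Filter S)
  have hF : ∀ f ∈ F.1.image (fun f n => f (n + k)), P.AdequateSeq f := by
    simpa using fun f hf => (F.2.2 f hf).comp_add k
  obtain ⟨m, -, a, t, ht, hprod⟩ :=
    hrJ _ (Filter.inter_mem (starSet_mem hr (hC _)) (chainExtenders_mem hr hb))
      _ (F.2.1.image _) hF {s₀} (Finset.singleton_nonempty s₀)
  refine ⟨⟨m, a, fun i => t i + k⟩, fun i j hij => Nat.add_lt_add_right (ht hij) k,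
    fun G hG i j => (hk G hG i).trans_le (Nat.le_add_left k _), fun f hf => ?_⟩
  obtain ⟨v, hv, hvA, -⟩ := hprod _ (Finset.mem_image_of_mem _ hf)
  exact ⟨v, hv, hvA⟩

variable (P)

open scoped Classical in
/-- Only the values of the recursive call below `F` are ever consulted (`isAdmissible_congr`). -/
noncomputable def build [Nonempty S] (r : Ultrafilter S) (C : ℕ → Set S) (F : P.AdequateFamily) :
    Stage S :=
  Classical.epsilon fun d => P.IsAdmissible r C
    (fun G => if _ : G.1 ⊂ F.1 then build r C G else Classical.arbitrary _) F d
termination_by F.1.card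
decreasing_by exact Finset.card_lt_card ‹_›

open scoped Classical in
theorem isAdmissible_build [Nonempty S] {r : Ultrafilter S}
    (hr : ∀ A ∈ r, {a | P.invImg a A ∈ r} ∈ r) (hrJ : ∀ A ∈ r, P.IsJSet A) {C : ℕ → Set S}
    (hC : ∀ n, C n ∈ r) (F : P.AdequateFamily) :
    P.IsAdmissible r C (P.build r C) F (P.build r C F) := by
  obtain ⟨d, hd⟩ := exists_isAdmissible hr hrJ hC fun G hG => isAdmissible_build hr hrJ hC G
  have hagree : ∀ G : P.AdequateFamily, G.1 ⊂ F.1 →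
      (if hG : G.1 ⊂ F.1 then P.build r C G else Classical.arbitrary _) = P.build r C G :=
    fun G hG => dif_pos hG
  rw [build]
  exact (isAdmissible_congr hagree).1 (Classical.epsilon_spec ⟨d, (isAdmissible_congr hagree).2 hd⟩)
termination_by F.1.card
decreasing_by exact Finset.card_lt_card hG

end PartialSemigroup

open PartialSemigroup in
theorem stmt12_general {S : Type*} (P : PartialSemigroup S)
    -- `r` is an idempotent in `J(S) ⊆ δS`:
    (r : Ultrafilter S)
    (hrJ : ∀ A : Set S, A ∈ r → P.IsJSet A)
    (hidem : ∀ A : Set S, A ∈ r ↔ {a : S | P.invImg a A ∈ r} ∈ r)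
    (C : ℕ → Set S) (hC : ∀ n, C n ∈ r) :
    ∃ mstar : {G : Finset (ℕ → S) // G.Nonempty ∧ ∀ f ∈ G, P.AdequateSeq f} → ℕ,
    ∃ α : ∀ G : {G : Finset (ℕ → S) // G.Nonempty ∧ ∀ f ∈ G, P.AdequateSeq f},
        Fin (mstar G + 1) → S,
    ∃ T : ∀ G : {G : Finset (ℕ → S) // G.Nonempty ∧ ∀ f ∈ G, P.AdequateSeq f},
        Fin (mstar G) → ℕ,
      (∀ G, StrictMono (T G)) ∧
      -- (1): if G ⊊ F then max T(G) < min T(F)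
      (∀ F G, G.1 ⊂ F.1 → ∀ i j, T G i < T F j) ∧
      -- (2): products along increasing chains with |G₁| = m land in C m
      (∀ (s : ℕ) (G : Fin (s + 1) → {G : Finset (ℕ → S) // G.Nonempty ∧
            ∀ f ∈ G, P.AdequateSeq f})
          (f : Fin (s + 1) → ℕ → S),
        (∀ i j : Fin (s + 1), i < j → (G i).1 ⊂ (G j).1) →
        (∀ i, f i ∈ (G i).1) →
        ∃ v, P.optProd ((List.finRange (s + 1)).map
              (fun i => P.jProd (α (G i)) (T (G i)) (f i))) = some v ∧
          v ∈ C ((G 0).1.card)) := by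
  have hr : ∀ A ∈ r, {a | P.invImg a A ∈ r} ∈ r := fun A => (hidem A).1
  have : Nonempty S := Filter.nonempty_of_neBot (r : Filter S)
  have hb := P.isAdmissible_build hr hrJ hC
  refine ⟨fun G => (P.build r C G).m, fun G => (P.build r C G).a, fun G => (P.build r C G).t,
    fun G => (hb G).1, fun F G hGF => (hb F).2.1 G hGF, fun s G f hG hf => ?_⟩
  obtain ⟨x, hx, hxC⟩ := chainProd_mem_starSet ⟨fun i j hij => hG i j hij, hf⟩ fun i => hb (G i)
  exact ⟨x, hx, P.starSet_subset r _ hxC⟩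

open PartialSemigroup in
/-- Phulara-type central sets theorem for adequate partial semigroups. -/
theorem stmt12 {S : Type*} (P : PartialSemigroup S) (hP : P.Adequate)
    -- `r` is an idempotent in `J(S) ⊆ δS`:
    (r : Ultrafilter S) (hrδ : P.mem_delta r)
    (hrJ : ∀ A : Set S, A ∈ r → P.IsJSet A)
    (hidem : ∀ A : Set S, A ∈ r ↔ {a : S | P.invImg a A ∈ r} ∈ r)
    (C : ℕ → Set S) (hC : ∀ n, C n ∈ r) :
    ∃ mstar : {G : Finset (ℕ → S) // G.Nonempty ∧ ∀ f ∈ G, P.AdequateSeq f} → ℕ,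
    ∃ α : ∀ G : {G : Finset (ℕ → S) // G.Nonempty ∧ ∀ f ∈ G, P.AdequateSeq f},
        Fin (mstar G + 1) → S,
    ∃ T : ∀ G : {G : Finset (ℕ → S) // G.Nonempty ∧ ∀ f ∈ G, P.AdequateSeq f},
        Fin (mstar G) → ℕ,
      (∀ G, StrictMono (T G)) ∧
      -- (1): if G ⊊ F then max T(G) < min T(F)
      (∀ F G, G.1 ⊂ F.1 → ∀ i j, T G i < T F j) ∧
      -- (2): products along increasing chains with |G₁| = m land in C m
      (∀ (s : ℕ) (G : Fin (s + 1) → {G : Finset (ℕ → S) // G.Nonempty ∧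
            ∀ f ∈ G, P.AdequateSeq f})
          (f : Fin (s + 1) → ℕ → S),
        (∀ i j : Fin (s + 1), i < j → (G i).1 ⊂ (G j).1) →
        (∀ i, f i ∈ (G i).1) →
        ∃ v, P.optProd ((List.finRange (s + 1)).map
              (fun i => P.jProd (α (G i)) (T (G i)) (f i))) = some v ∧
          v ∈ C ((G 0).1.card)) :=
  stmt12_general P r hrJ hidem C hC
end

section
/- Let (S,+) be a commutative adequate partial semigroup and let 𝒜 be a shift-invariant, adequately partition regular family of finite subsets of S. If E ⊆ S is piecewise syndetic, then E contains a member of 𝒜. -/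
namespace PartialSemigroup
variable {S : Type*} (P : PartialSemigroup S)

/-- The `c`-fold sum `s + s + ⋯ + s` (partially defined). -/
def nsmulP (c : ℕ) (s : S) : Option S := P.listProd (List.replicate c s)

/-- `cS = {c·s : s ∈ S}`. -/
def nSet (c : ℕ) : Set S := {x | ∃ s : S, P.nsmulP c s = some x}

end PartialSemigroup

/-- The first entries condition for a matrix with natural number entries:
no row is zero, and any two rows whose first nonzero entries occur in the
same column have equal first entries (positivity is automatic over ℕ). -/
def FirstEntriesCond {u v : ℕ} (a : Fin u → Fin v → ℕ) : Prop :=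
  (∀ i, ∃ k, a i k ≠ 0) ∧
  ∀ i i' k, (a i k ≠ 0 ∧ ∀ j, j < k → a i j = 0) →
    (a i' k ≠ 0 ∧ ∀ j, j < k → a i' j = 0) → a i k = a i' k

/-- `c` is a first entry of the matrix `a`. -/
def IsFirstEntry {u v : ℕ} (a : Fin u → Fin v → ℕ) (c : ℕ) : Prop :=
  ∃ i k, a i k = c ∧ c ≠ 0 ∧ ∀ j, j < k → a i j = 0

namespace PartialSemigroup
variable {S : Type*} (P : PartialSemigroup S)

/-- Addition on `S ∪ {0}` (inner `none` = the formal zero), partially defined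
(outer `none` = undefined). -/
def zAdd : Option (Option S) → Option (Option S) → Option (Option S)
  | none, _ => none
  | _, none => none
  | some none, some b => some b
  | some a, some none => some a
  | some (some a), some (some b) => (P.mul a b).map some

/-- Sum of a list of elements of `S ∪ {0}`. -/
def zListSum (l : List (Option S)) : Option (Option S) :=
  l.foldl (fun acc b => P.zAdd acc (some b)) (some none)

/-- `(m_γ)_{γ ∈ ℱ_d}` generates the VIP system `(v_α)`:
`v_α = ∑_{γ ⊆ α, |γ| ≤ d} m_γ` for all nonempty finite `α ⊆ ℕ` (sums defined). -/
def GeneratesVIP (d : ℕ) (m : Finset ℕ → Option S) (v : Finset ℕ → S) : Prop :=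
  ∀ α : Finset ℕ, α.Nonempty →
    P.zListSum (((α.powerset.filter (fun γ => γ.card ≤ d)).toList).map m)
      = some (some (v α))

/-- A VIP system in a commutative partial semigroup. -/
def IsVIP (v : Finset ℕ → S) : Prop := ∃ d m, P.GeneratesVIP d m v

/-- An adequate (finite) set of VIP systems `v^{(1)}, …, v^{(k)}`. -/
def AdequateVIPFamily (k : ℕ) (v : Fin k → Finset ℕ → S) : Prop :=
  ∃ (d t : ℕ) (mg : Fin k → Finset ℕ → Option S)
    (n : Fin t → Finset ℕ → Option S) (E : Fin k → Finset (Fin t)),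
    -- the `(n^{(i)})` generate VIP systems `u^{(i)}` in `S`
    (∀ i : Fin t, ∃ u : Finset ℕ → S, P.GeneratesVIP d (n i) u) ∧
    -- (1) `(m^{(i)}_γ)` generates `(v^{(i)}_α)`
    (∀ i : Fin k, P.GeneratesVIP d (mg i) (v i)) ∧
    -- (2) tails of double sums land in `σ(H) ∪ {0}` (and are defined)
    (∀ H : Finset S, H.Nonempty → ∃ m : ℕ,
      ∀ (l : ℕ) (γs : Fin l → Finset ℕ), Function.Injective γs →
        (∀ j, (γs j).card ≤ d) → (∀ j, ¬ γs j ⊆ Finset.Icc 1 m) →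
        ∃ w, P.zListSum (((List.finRange t).map (fun i =>
              (List.finRange l).map (fun j => n i (γs j)))).flatten)
            = some w ∧ (w = none ∨ ∃ s, w = some s ∧ s ∈ P.sigma ↑H)) ∧
    -- (3) `m^{(i)}_γ = ∑_{t ∈ E_i} n^{(t)}_γ`
    (∀ i γ, P.zListSum ((E i).toList.map (fun j => n j γ)) = some (mg i γ))

/-- An adequately partition regular family of finite subsets of `S`. -/
def AdequatelyPartitionRegular (𝒜 : Set (Finset S)) : Prop :=
  ∀ H : Finset S, H.Nonempty → ∀ r : ℕ, 0 < r →
    ∃ F : Finset S, ↑F ⊆ P.sigma ↑H ∧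
      ∀ c : S → Fin r, ∃ B ∈ 𝒜, ↑B ⊆ (F : Set S) ∧ ∃ j, ∀ x ∈ B, c x = j

/-- A shift invariant family of finite subsets of `S`. -/
def ShiftInvariantFam (𝒜 : Set (Finset S)) : Prop :=
  ∀ B ∈ 𝒜, ∀ x ∈ P.sigma (↑B : Set S),
    ∃ B' ∈ 𝒜, (↑B' : Set S) = {s | ∃ b ∈ B, P.mul b x = some s}

end PartialSemigroup

open PartialSemigroup in
/-- Compactness: an adequately partition regular family yields an ultrafilter in
`δS` all of whose members contain a member of the family. -/
private theorem exists_good_ultrafilter {S : Type*} (P : PartialSemigroup S)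
    (𝒜 : Set (Finset S)) (hpr : P.AdequatelyPartitionRegular 𝒜)
    (s₀ : S) (h₀ : ∅ ∉ 𝒜) :
    ∃ u : Ultrafilter S, P.mem_delta u ∧ ∀ A ∈ u, ∃ B ∈ 𝒜, (↑B : Set S) ⊆ A := by
  classical
  have hSne : Nonempty S := ⟨s₀⟩
  set 𝒟 : Set (Set S) := {A | ∃ B ∈ 𝒜, (↑B : Set S) ⊆ A} with h𝒟
  set ℬ : Set (Set S) := {s | (∃ x, s = P.phi x) ∨ ∃ A, s = Aᶜ ∧ A ∉ 𝒟} with hℬ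
  have hFIP : ∀ t ⊆ ℬ, Set.Finite t → (⋂₀ t).Nonempty := by
    intro t htB htfin
    have htφfin : {s | s ∈ t ∧ ∃ x, s = P.phi x}.Finite :=
      htfin.subset (fun s hs => hs.1)
    have htcfin : (t \ {s | s ∈ t ∧ ∃ x, s = P.phi x}).Finite :=
      htfin.subset Set.diff_subset
    set tφ := htφfin.toFinset with htφdef
    set tc := htcfin.toFinset with htcdef
    have hφex : ∀ s ∈ tφ, ∃ x, s = P.phi x := by
      intro s hs
      rw [htφdef, Set.Finite.mem_toFinset] at hs
      exact hs.2
    have hcex : ∀ s ∈ tc, ∃ A, s = Aᶜ ∧ A ∉ 𝒟 := by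
      intro s hs
      rw [htcdef, Set.Finite.mem_toFinset] at hs
      rcases htB hs.1 with h | h
      · exact absurd ⟨hs.1, h⟩ hs.2
      · exact h
    choose! xw hxw using hφex
    choose! Aw hAw1 hAw2 using hcex
    set H : Finset S := insert s₀ (tφ.image xw) with hH
    set n := tc.card with hn
    set g : Fin n → Set S := fun j => ((tc.equivFin.symm j : {x // x ∈ tc}) : Set S) with hg
    have hgmem : ∀ j, g j ∈ tc := fun j => (tc.equivFin.symm j).2
    have hgsurj : ∀ s ∈ tc, ∃ j, g j = s := by
      intro s hs
      exact ⟨tc.equivFin ⟨s, hs⟩, by simp [hg]⟩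
    obtain ⟨F, hFσ, hcol⟩ := hpr H ⟨s₀, Finset.mem_insert_self _ _⟩ (n + 1) (Nat.succ_pos n)
    set c : S → Fin (n + 1) := fun x =>
      if h : ∃ j : Fin n, x ∈ Aw (g j) then (h.choose).castSucc else Fin.last n with hc
    obtain ⟨B, hB𝒜, hBF, j₀, hj₀⟩ := hcol c
    obtain ⟨b, hb⟩ : B.Nonempty :=
      Finset.nonempty_iff_ne_empty.2 (fun h => h₀ (h ▸ hB𝒜))
    have hbσ : ∀ x ∈ B, x ∈ P.sigma ↑H := fun x hx => hFσ (hBF hx)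
    rcases Fin.eq_castSucc_or_eq_last j₀ with ⟨j, hj⟩ | hj
    · exfalso
      have hBsub : (↑B : Set S) ⊆ Aw (g j) := by
        intro x hx
        have hcx := hj₀ x hx
        rw [hj] at hcx
        by_cases h : ∃ j' : Fin n, x ∈ Aw (g j')
        · have hcx' : c x = (h.choose).castSucc := by rw [hc]; exact dif_pos h
          rw [hcx'] at hcx
          have hcj := Fin.castSucc_injective _ hcx
          rw [← hcj]
          exact h.choose_spec
        · have hcx' : c x = Fin.last n := by rw [hc]; exact dif_neg h
          rw [hcx'] at hcx
          exact absurd hcx.symm (Fin.castSucc_lt_last j).ne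
      exact hAw2 (g j) (hgmem j) ⟨B, hB𝒜, hBsub⟩
    · refine ⟨b, ?_⟩
      rintro s hst
      by_cases hs : s ∈ t ∧ ∃ x, s = P.phi x
      · have hsφ : s ∈ tφ := by rw [htφdef, Set.Finite.mem_toFinset]; exact hs
        rw [hxw s hsφ]
        have hxwH : xw s ∈ H := Finset.mem_insert_of_mem (Finset.mem_image_of_mem _ hsφ)
        have hb' := hbσ b hb
        simp only [PartialSemigroup.sigma, Set.mem_iInter] at hb'
        exact hb' _ hxwH
      · have hsc : s ∈ tc := by
          rw [htcdef, Set.Finite.mem_toFinset]; exact ⟨hst, hs⟩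
        have hcb := hj₀ b hb
        rw [hj] at hcb
        have hnot : ¬ ∃ j' : Fin n, b ∈ Aw (g j') := by
          intro h
          have hcb' : c b = (h.choose).castSucc := by rw [hc]; exact dif_pos h
          rw [hcb'] at hcb
          exact (Fin.castSucc_lt_last _).ne hcb
        rw [hAw1 s hsc]
        simp only [Set.mem_compl_iff]
        intro hbA
        obtain ⟨j, hjg⟩ := hgsurj s hsc
        exact hnot ⟨j, by rw [hjg]; exact hbA⟩
  have hgen : (Filter.generate ℬ).NeBot := by
    rw [Filter.generate_neBot_iff]
    exact hFIP
  obtain ⟨u, hu⟩ := Ultrafilter.exists_le (Filter.generate ℬ)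
  have humem : ∀ s ∈ ℬ, s ∈ u := fun s hs => hu (Filter.mem_generate_of_mem hs)
  refine ⟨u, fun x => humem _ (Or.inl ⟨x, rfl⟩), ?_⟩
  intro A hA
  by_contra hA𝒟
  have hcmem : Aᶜ ∈ u := humem _ (Or.inr ⟨A, rfl, hA𝒟⟩)
  exact (Ultrafilter.compl_notMem_iff.2 hA) hcmem

open PartialSemigroup in
/-- A shift invariant, adequately partition regular family of finite sets meets
every piecewise syndetic set. -/
theorem stmt17 {S : Type*} (P : PartialSemigroup S) (hP : P.Adequate)
    (hcomm : ∀ a b : S, P.mul a b = P.mul b a)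
    (𝒜 : Set (Finset S)) (hshift : P.ShiftInvariantFam 𝒜)
    (hpr : P.AdequatelyPartitionRegular 𝒜)
    (star : {q : Ultrafilter S // P.mem_delta q} → {q : Ultrafilter S // P.mem_delta q} →
      {q : Ultrafilter S // P.mem_delta q})
    (hstar : ∀ p q (A : Set S),
      A ∈ (star p q).1 ↔ {a : S | P.invImg a A ∈ q.1} ∈ p.1)
    (K : Set {q : Ultrafilter S // P.mem_delta q}) (hK : P.IsSmallestIdeal star K)
    (E : Set S) (hE : ∃ q ∈ K, E ∈ q.1) :
    ∃ B ∈ 𝒜, ↑B ⊆ E := by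
  classical
  obtain ⟨q, hqK, hqE⟩ := hE
  by_cases h₀ : ∅ ∈ 𝒜
  · exact ⟨∅, h₀, by simp⟩
  have hSne : Nonempty S := Filter.nonempty_of_neBot (q.1 : Filter S)
  obtain ⟨s₀⟩ := hSne
  obtain ⟨u, hud, huC⟩ := exists_good_ultrafilter P 𝒜 hpr s₀ h₀
  set 𝒞 : Set {r : Ultrafilter S // P.mem_delta r} :=
    {p | ∀ A ∈ p.1, ∃ B ∈ 𝒜, (↑B : Set S) ⊆ A} with h𝒞
  have hCideal : P.IsIdeal star 𝒞 := by
    refine ⟨⟨⟨u, hud⟩, huC⟩, ?_⟩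
    intro p hp r
    constructor
    · intro A hA
      have hT : {a : S | P.invImg a A ∈ r.1} ∈ p.1 := (hstar p r A).1 hA
      obtain ⟨B, hB𝒜, hBT⟩ := hp _ hT
      have hD : (⋂ b ∈ B, P.invImg b A) ∈ (r.1 : Filter S) :=
        (Filter.biInter_finset_mem B).2 (fun b hb => hBT (Finset.mem_coe.2 hb))
      obtain ⟨x, hx⟩ := Filter.nonempty_of_mem hD
      simp only [Set.mem_iInter] at hx
      have hxσ : x ∈ P.sigma (↑B : Set S) := by
        simp only [PartialSemigroup.sigma, Set.mem_iInter]
        intro b hb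
        obtain ⟨v, hv, -⟩ := hx b (Finset.mem_coe.1 hb)
        simp [PartialSemigroup.phi, hv]
      obtain ⟨B', hB'𝒜, hB'eq⟩ := hshift B hB𝒜 x hxσ
      refine ⟨B', hB'𝒜, ?_⟩
      intro s hs
      rw [hB'eq] at hs
      obtain ⟨b, hbB, hbs⟩ := hs
      obtain ⟨v, hv, hvA⟩ := hx b hbB
      rw [hv] at hbs
      obtain rfl := Option.some.inj hbs
      exact hvA
    · intro A hA
      have hT : {a : S | P.invImg a A ∈ p.1} ∈ r.1 := (hstar r p A).1 hA
      obtain ⟨a, ha⟩ := Filter.nonempty_of_mem (Ultrafilter.mem_coe.2 hT)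
      obtain ⟨B, hB𝒜, hBsub⟩ := hp _ ha
      have haσ : a ∈ P.sigma (↑B : Set S) := by
        simp only [PartialSemigroup.sigma, Set.mem_iInter]
        intro b hb
        obtain ⟨v, hv, -⟩ := hBsub hb
        simp [PartialSemigroup.phi, hcomm b a, hv]
      obtain ⟨B', hB'𝒜, hB'eq⟩ := hshift B hB𝒜 a haσ
      refine ⟨B', hB'𝒜, ?_⟩
      intro s hs
      rw [hB'eq] at hs
      obtain ⟨b, hbB, hbs⟩ := hs
      obtain ⟨v, hv, hvA⟩ := hBsub (Finset.mem_coe.2 hbB)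
      rw [hcomm b a, hv] at hbs
      obtain rfl := Option.some.inj hbs
      exact hvA
  have hq𝒞 : q ∈ 𝒞 := hK.2 𝒞 hCideal hqK
  exact hq𝒞 E hqE
end
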